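/- Let P, Q : ℤ → ℝ. Then ½·𝒫₂ applied to the pair (P − Q − Q⁺, Q + Q⁻ + Q⁺ − P − P⁻) equals the second positive flow of the Ablowitz–Ladik hierarchy, namely the pair whose first component is ½ P(PQ − PQ⁺ + P⁻Q − P⁺Q⁺ + Q⁺Q⁺⁺ + Q⁺Q⁺ − QQ⁻ − Q²) and whose second component is ½ Q(P² − (P⁻)² − P⁺Q⁺ − 2PQ⁺ − PQ + P⁻Q + 2P⁻Q⁻ + P⁻⁻Q⁻ + Q⁺Q⁺⁺ + Q⁺Q⁺ + QQ⁺ − Q⁻Q⁻⁻ − QQ⁻ − (Q⁻)²). Here (P − Q − Q⁺, Q + Q⁻ + Q⁺ − P − P⁻) is the variational derivative of the Hamiltonian H₀ = Σₙ ½(Q(Q + Q⁻ − P − P⁻) + QQ⁺ − PQ⁺ − PQ + P²), so the t₁-flow is Hamiltonian with respect to the second Hamiltonian operator 𝒫₂ with Hamiltonian ½H₀. -/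
import Mathlib

/-- The shift operator: `(shift f) n = f (n+1)`, i.e. `f⁺`. -/
def shift (f : ℤ → ℝ) : ℤ → ℝ := fun n => f (n + 1)

/-- The inverse shift operator: `(shiftInv f) n = f (n-1)`, i.e. `f⁻`. -/
def shiftInv (f : ℤ → ℝ) : ℤ → ℝ := fun n => f (n - 1)

/-- The second Hamiltonian operator of the Ablowitz–Ladik hierarchy:
`𝒫₂(ξ) = ( P((Qξ₂)⁺ − Qξ₂) , Q(Pξ₁ − (Pξ₁)⁻) + Q((Qξ₂)⁺ − (Qξ₂)⁻) )`. -/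
def P2op (P Q : ℤ → ℝ) (ξ : (ℤ → ℝ) × (ℤ → ℝ)) : (ℤ → ℝ) × (ℤ → ℝ) :=
  (P * (shift (Q * ξ.2) - Q * ξ.2),
   Q * (P * ξ.1 - shiftInv (P * ξ.1)) + Q * (shift (Q * ξ.2) - shiftInv (Q * ξ.2)))

/-- `½·𝒫₂` applied to the variational derivative
`(P − Q − Q⁺, Q + Q⁻ + Q⁺ − P − P⁻)` of the Hamiltonian `H₀` equals the second positive
flow (the `t₁`-flow) of the Ablowitz–Ladik hierarchy: the `t₁`-flow is Hamiltonian with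
respect to `𝒫₂` with Hamiltonian `½H₀`. -/
theorem second_positive_flow_hamiltonian_P2 (P Q : ℤ → ℝ) :
    (1 / 2 : ℝ) • P2op P Q
        (fun n => P n - Q n - Q (n + 1),
         fun n => Q n + Q (n - 1) + Q (n + 1) - P n - P (n - 1)) =
      (fun n => (1 / 2) * P n *
          (P n * Q n - P n * Q (n + 1) + P (n - 1) * Q n - P (n + 1) * Q (n + 1) +
            Q (n + 1) * Q (n + 2) + Q (n + 1) * Q (n + 1) - Q n * Q (n - 1) - Q n ^ 2),
       fun n => (1 / 2) * Q n *
          (P n ^ 2 - P (n - 1) ^ 2 - P (n + 1) * Q (n + 1) - 2 * P n * Q (n + 1) -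
            P n * Q n + P (n - 1) * Q n + 2 * P (n - 1) * Q (n - 1) +
            P (n - 2) * Q (n - 1) + Q (n + 1) * Q (n + 2) + Q (n + 1) * Q (n + 1) +
            Q n * Q (n + 1) - Q (n - 1) * Q (n - 2) - Q n * Q (n - 1) - Q (n - 1) ^ 2)) := by
  unfold P2op shift shiftInv
  refine Prod.ext (funext fun n => ?_) (funext fun n => ?_) <;>
  · simp only [Prod.smul_fst, Prod.smul_snd, Pi.smul_apply, Pi.mul_apply, Pi.add_apply,
      Pi.sub_apply, smul_eq_mul]
    have h1 : n + 1 + 1 = n + 2 := by ring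
    have h2 : n + 1 - 1 = n := by ring
    have h3 : n - 1 + 1 = n := by ring
    have h4 : n - 1 - 1 = n - 2 := by ring
    simp only [h1, h2, h3, h4]
    ring
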